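/- arXiv:1706.08147 — 2 statements merged into one kernel-verified Lean document; each statement's English description precedes it below -/
import Mathlib

section
/- Every maximal element f of H_0[ℓ1(A)]_+ is of the form f = g_φ for some continuous linear functional φ on ℓ∞(A), where g_φ(x*) = |φ(|x*|)|. -/
/-!
Maximality is used twice, each time against a positively homogeneous majorant of `f` whose
FBL-norm is at most that of `f`. The first majorant, `x ↦ sup {Σ f yᵢ : Σ |yᵢ| ≤ |x|}`, shows
that `f x ≤ f |x|` and that `f` is superadditive, hence concave, on the positive cone. Hahn–Banach
then separates `{z ≥ 0 : f z > 1}` from the ball of radius `1 / ‖f‖`, which yields `ψ` with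
`‖ψ‖ ≤ ‖f‖` and `f ≤ max ψ 0` on the cone; the second majorant `x ↦ max (ψ |x|) 0` forces
`f x = max (ψ |x|) 0`. On the cone this formula is subadditive, so `f` is additive there and
extends to a positive, hence bounded, linear functional `φ` with `f x = φ |x|`.
-/

open scoped ENNReal

noncomputable section

/-- Positive homogeneity for functions on `ℓ∞(A)` (the dual of `ℓ1(A)`). -/
def PosHomA {A : Type*} (f : lp (fun _ : A => ℝ) ⊤ → ℝ) : Prop :=
  ∀ (c : ℝ), 0 ≤ c → ∀ x, f (c • x) = c * f x

/-- `x_1*, …, x_n* ∈ ℓ∞(A)` with `sup_{a ∈ A} Σ |x_k*(a)| ≤ 1`. -/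
def AdmissibleA {A : Type*} (l : List (lp (fun _ : A => ℝ) ⊤)) : Prop :=
  ∀ a : A, (l.map (fun x => |x a|)).sum ≤ 1

/-- The norm `‖f‖_{FBL[ℓ1(A)]}` (possibly infinite). -/
def fblNormA {A : Type*} (f : lp (fun _ : A => ℝ) ⊤ → ℝ) : ℝ≥0∞ :=
  ⨆ l : {l : List (lp (fun _ : A => ℝ) ⊤) // AdmissibleA l},
    ENNReal.ofReal ((l.1.map (fun x => |f x|)).sum)

/-- `f` is a maximal element of `H_0[ℓ1(A)]_+`: it cannot be pointwise increased
without changing its FBL-norm. -/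
def MaximalA {A : Type*} (f : lp (fun _ : A => ℝ) ⊤ → ℝ) : Prop :=
  PosHomA f ∧ (∀ x, 0 ≤ f x) ∧ fblNormA f < ∞ ∧
    ∀ g : lp (fun _ : A => ℝ) ⊤ → ℝ, PosHomA g → (∀ x, 0 ≤ g x) → fblNormA g < ∞ →
      (∀ x, f x ≤ g x) → fblNormA g = fblNormA f → g = f

/-- pointwise absolute value on `ℓ∞(A)`. -/
def lpAbs {A : Type*} (x : lp (fun _ : A => ℝ) ⊤) : lp (fun _ : A => ℝ) ⊤ :=
  ⟨fun a => |x a|, by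
    have h := lp.memℓp x
    have h2 : Memℓp (fun a => |(x : _ → ℝ) a|) ⊤ := by
      rw [memℓp_infty_iff] at h ⊢
      simpa [Real.norm_eq_abs, abs_abs] using h
    exact h2⟩

open scoped lp

section Cone

variable {E : Type*} [AddCommGroup E] [Module ℝ E] {P : PointedCone ℝ E} {F : E → ℝ}

theorem concaveOn_of_superadditive
    (hhom : ∀ p ∈ P, ∀ c : ℝ, 0 ≤ c → F (c • p) = c * F p)
    (hsup : ∀ p ∈ P, ∀ q ∈ P, F p + F q ≤ F (p + q)) : ConcaveOn ℝ P F :=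
  ⟨P.convex, fun p hp q hq a b ha hb _ => by
    simpa only [smul_eq_mul, hhom p hp a ha, hhom q hq b hb] using
      hsup _ (P.smul_mem ha hp) _ (P.smul_mem hb hq)⟩

/-- On a reproducing cone, `φ (p - q) := F p - F q` is well defined because `F` is additive. -/
theorem PointedCone.exists_linearMap_eq_of_additive
    (hP : (P : ConvexCone ℝ E).IsReproducing)
    (hhom : ∀ p ∈ P, ∀ c : ℝ, 0 ≤ c → F (c • p) = c * F p)
    (hadd : ∀ p ∈ P, ∀ q ∈ P, F (p + q) = F p + F q) :
    ∃ φ : E →ₗ[ℝ] ℝ, ∀ p ∈ P, φ p = F p := by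
  have hdiff : ∀ p ∈ P, ∀ q ∈ P, ∀ p' ∈ P, ∀ q' ∈ P,
      p - q = p' - q' → F p - F q = F p' - F q' := by
    intro p hp q hq p' hp' q' hq' h
    have := congrArg F (sub_eq_sub_iff_add_eq_add.mp h)
    rw [hadd p hp q' hq', hadd p' hp' q hq] at this
    linarith
  have hdecomp (x : E) : ∃ p ∈ P, ∃ q ∈ P, p - q = x :=
    Set.mem_sub.mp (hP.sub_eq_univ ▸ Set.mem_univ x)
  choose pos hpos neg hneg hsub using hdecomp
  refine ⟨⟨⟨fun x => F (pos x) - F (neg x), fun x y => ?_⟩, fun c x => ?_⟩, fun p hp => ?_⟩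
  · rw [hdiff _ (hpos _) _ (hneg _) _ (P.add_mem (hpos x) (hpos y)) _
      (P.add_mem (hneg x) (hneg y)) (by rw [hsub, add_sub_add_comm, hsub, hsub]),
      hadd _ (hpos x) _ (hpos y), hadd _ (hneg x) _ (hneg y)]
    ring
  · simp only [RingHom.id_apply, smul_eq_mul]
    rcases le_total 0 c with hc | hc
    · rw [hdiff _ (hpos _) _ (hneg _) _ (P.smul_mem hc (hpos x)) _ (P.smul_mem hc (hneg x))
        (by rw [hsub, ← smul_sub, hsub]), hhom _ (hpos x) c hc, hhom _ (hneg x) c hc]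
      ring
    · have hc' : 0 ≤ -c := neg_nonneg.mpr hc
      rw [hdiff _ (hpos _) _ (hneg _) _ (P.smul_mem hc' (hneg x)) _ (P.smul_mem hc' (hpos x))
        (by rw [hsub, ← smul_sub, neg_smul, ← smul_neg, neg_sub, hsub]),
        hhom _ (hneg x) _ hc', hhom _ (hpos x) _ hc']
      ring
  · have hF0 : F 0 = 0 := by simpa using hhom p hp 0 le_rfl
    change F (pos p) - F (neg p) = F p
    rw [hdiff _ (hpos _) _ (hneg _) _ hp _ P.zero_mem (by rw [hsub, sub_zero]), hF0, sub_zero]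

end Cone

section Separation

variable {E : Type*} [NormedAddCommGroup E] [NormedSpace ℝ E] {P : PointedCone ℝ E} {F : E → ℝ}

theorem exists_dual_le_max_of_concaveOn {N : ℝ}
    (hN : 0 ≤ N) (hconc : ConcaveOn ℝ P F)
    (hhom : ∀ p ∈ P, ∀ c : ℝ, 0 ≤ c → F (c • p) = c * F p)
    (hbound : ∀ p ∈ P, F p ≤ N * ‖p‖) :
    ∃ ψ : StrongDual ℝ E, ‖ψ‖ ≤ N ∧ ∀ p ∈ P, F p ≤ max (ψ p) 0 := by
  rcases hN.eq_or_lt with rfl | hN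
  · exact ⟨0, by simp, fun p hp => by simpa using hbound p hp⟩
  have hdisj : Disjoint (Metric.ball (0 : E) N⁻¹) {p ∈ (P : Set E) | 1 < F p} := by
    refine Set.disjoint_left.mpr fun p hp ⟨hpP, hFp⟩ => ?_
    have : N * ‖p‖ < 1 := by
      calc N * ‖p‖ < N * N⁻¹ := by gcongr; exact mem_ball_zero_iff.mp hp
        _ = 1 := mul_inv_cancel₀ hN.ne'
    linarith [hbound p hpP]
  obtain ⟨φ, u, hball, hW⟩ := geometric_hahn_banach_open (convex_ball 0 N⁻¹)
    Metric.isOpen_ball (hconc.convex_gt 1) hdisj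
  have hu : 0 < u := by simpa using hball 0 (Metric.mem_ball_self (inv_pos.mpr hN))
  set ψ : StrongDual ℝ E := u⁻¹ • φ
  have hψ_apply (y : E) : ψ y = u⁻¹ * φ y := rfl
  have hψ_closedBall : ∀ y ∈ Metric.closedBall (0 : E) N⁻¹, ψ y ≤ 1 := by
    rw [← closure_ball 0 (inv_ne_zero hN.ne')]
    refine fun y hy => closure_minimal (fun y hy => ?_) (isClosed_le ψ.continuous
      continuous_const) hy
    change ψ y ≤ 1
    rw [hψ_apply, inv_mul_le_one₀ hu]
    exact (hball y hy).le
  refine ⟨ψ, ?_, fun p hp => ?_⟩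
  · have := ContinuousLinearMap.opNorm_bound_of_ball_bound (inv_pos.mpr hN) 1 ψ fun z hz =>
      abs_le.mpr ⟨neg_le.mpr (by simpa using hψ_closedBall (-z) (by simpa using hz)),
        hψ_closedBall z hz⟩
    simpa using this
  · by_contra! h
    obtain ⟨t, hψt, htF⟩ := exists_between h
    have ht : 0 < t := (le_max_right _ _).trans_lt hψt
    have hmem : t⁻¹ • p ∈ {p ∈ (P : Set E) | 1 < F p} :=
      ⟨P.smul_mem (inv_nonneg.mpr ht.le) hp, by
        rwa [hhom p hp _ (inv_nonneg.mpr ht.le), lt_inv_mul_iff₀ ht, mul_one]⟩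
    have hφp := hW _ hmem
    rw [map_smul, smul_eq_mul, le_inv_mul_iff₀ ht] at hφp
    have hψp : ψ p < t := (le_max_left _ _).trans_lt hψt
    rw [hψ_apply, inv_mul_lt_iff₀ hu] at hψp
    linarith

end Separation

section NonnegCone

variable {A : Type*}

def lpNonnegCone (A : Type*) : PointedCone ℝ ℓ^∞(A, ℝ) where
  carrier := {x | ∀ a, 0 ≤ x a}
  add_mem' hx hy a := add_nonneg (hx a) (hy a)
  zero_mem' _ := le_rfl
  smul_mem' c _ hx a := mul_nonneg c.2 (hx a)

theorem lp.abs_apply_le_norm (x : ℓ^∞(A, ℝ)) (a : A) : |x a| ≤ ‖x‖ :=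
  lp.norm_apply_le_norm ENNReal.top_ne_zero x a

theorem norm_smul_one_sub_mem_lpNonnegCone (x : ℓ^∞(A, ℝ)) : ‖x‖ • 1 - x ∈ lpNonnegCone A :=
  fun a => by
    simp only [lp.coeFn_sub, lp.coeFn_smul, lp.infty_coeFn_one, Pi.sub_apply, Pi.smul_apply,
      Pi.one_apply, smul_eq_mul, mul_one, sub_nonneg]
    exact (le_abs_self (x a)).trans (lp.abs_apply_le_norm x a)

theorem lpNonnegCone_isReproducing : (lpNonnegCone A : ConvexCone ℝ ℓ^∞(A, ℝ)).IsReproducing :=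
  ConvexCone.IsReproducing.of_univ_subset fun x _ =>
    ⟨‖x‖ • 1, (lpNonnegCone A).smul_mem (norm_nonneg x) fun a => by simp [lp.infty_coeFn_one],
      ‖x‖ • 1 - x, norm_smul_one_sub_mem_lpNonnegCone x, sub_sub_cancel _ _⟩

theorem abs_le_of_nonneg_on_lpNonnegCone (φ : ℓ^∞(A, ℝ) →ₗ[ℝ] ℝ)
    (hφ : ∀ p ∈ lpNonnegCone A, 0 ≤ φ p) (x : ℓ^∞(A, ℝ)) : |φ x| ≤ φ 1 * ‖x‖ := by
  have h₁ := hφ _ (norm_smul_one_sub_mem_lpNonnegCone x)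
  have h₂ := hφ _ (norm_smul_one_sub_mem_lpNonnegCone (-x))
  simp only [map_sub, map_add, map_smul, norm_neg, smul_eq_mul, sub_neg_eq_add] at h₁ h₂
  rw [abs_le]
  constructor <;> linarith

theorem exists_dual_eq_on_lpNonnegCone {F : ℓ^∞(A, ℝ) → ℝ}
    (hhom : ∀ p ∈ lpNonnegCone A, ∀ c : ℝ, 0 ≤ c → F (c • p) = c * F p)
    (hadd : ∀ p ∈ lpNonnegCone A, ∀ q ∈ lpNonnegCone A, F (p + q) = F p + F q)
    (hF : ∀ p ∈ lpNonnegCone A, 0 ≤ F p) :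
    ∃ φ : StrongDual ℝ ℓ^∞(A, ℝ), ∀ p ∈ lpNonnegCone A, φ p = F p := by
  obtain ⟨φ, hφ⟩ :=
    PointedCone.exists_linearMap_eq_of_additive lpNonnegCone_isReproducing hhom hadd
  exact ⟨φ.mkContinuous (φ 1)
    (abs_le_of_nonneg_on_lpNonnegCone φ fun p hp => hφ p hp ▸ hF p hp), hφ⟩

theorem lpAbs_apply (x : ℓ^∞(A, ℝ)) (a : A) : lpAbs x a = |x a| := rfl

theorem lpAbs_mem_lpNonnegCone (x : ℓ^∞(A, ℝ)) : lpAbs x ∈ lpNonnegCone A :=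
  fun a => abs_nonneg (x a)

theorem lpAbs_eq_self {p : ℓ^∞(A, ℝ)} (hp : p ∈ lpNonnegCone A) : lpAbs p = p :=
  lp.ext <| funext fun a => abs_of_nonneg (hp a)

theorem lpAbs_lpAbs (x : ℓ^∞(A, ℝ)) : lpAbs (lpAbs x) = lpAbs x :=
  lpAbs_eq_self (lpAbs_mem_lpNonnegCone x)

theorem lpAbs_smul {c : ℝ} (hc : 0 ≤ c) (x : ℓ^∞(A, ℝ)) : lpAbs (c • x) = c • lpAbs x :=
  lp.ext <| funext fun a => by simp [lpAbs_apply, abs_mul, abs_of_nonneg hc]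

theorem lp.list_sum_apply (l : List ℓ^∞(A, ℝ)) (a : A) : l.sum a = (l.map fun y => y a).sum := by
  induction l with
  | nil => rfl
  | cons y l ih => simp only [List.sum_cons, List.map_cons, lp.coeFn_add, Pi.add_apply, ih]

end NonnegCone

section Maximal

variable {A : Type*} {f g : ℓ^∞(A, ℝ) → ℝ}

theorem PosHomA.map_zero (hf : PosHomA f) : f 0 = 0 := by
  simpa using hf 0 le_rfl 0

theorem posHomA_of_mul_le (hg₀ : ∀ x, 0 ≤ g x)
    (hg : ∀ c : ℝ, 0 ≤ c → ∀ x, c * g x ≤ g (c • x)) : PosHomA g := by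
  intro c hc x
  rcases hc.eq_or_lt with rfl | hc
  · have h := hg 2 zero_le_two 0
    rw [smul_zero] at h
    rw [zero_smul, zero_mul]
    linarith [hg₀ 0]
  · refine le_antisymm ?_ (hg c hc.le x)
    have h := hg c⁻¹ (inv_nonneg.mpr hc.le) (c • x)
    rwa [inv_smul_smul₀ hc.ne', inv_mul_le_iff₀ hc] at h

theorem sum_abs_le_toReal_fblNormA (hfin : fblNormA f < ∞) {l : List ℓ^∞(A, ℝ)}
    (hl : AdmissibleA l) : (l.map fun x => |f x|).sum ≤ (fblNormA f).toReal :=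
  (ENNReal.ofReal_le_iff_le_toReal hfin.ne).mp <|
    le_iSup (fun l : {l : List ℓ^∞(A, ℝ) // AdmissibleA l} =>
      ENNReal.ofReal ((l.1.map fun x => |f x|).sum)) ⟨l, hl⟩

theorem sum_abs_le_toReal_fblNormA_mul (hf : PosHomA f) (hfin : fblNormA f < ∞)
    {l : List ℓ^∞(A, ℝ)} {C : ℝ} (hC : 0 < C) (hl : ∀ a, (l.map fun y => |y a|).sum ≤ C) :
    (l.map fun y => |f y|).sum ≤ (fblNormA f).toReal * C := by
  have hadm : AdmissibleA (l.map (C⁻¹ • ·)) := fun a => by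
    simpa [Function.comp_def, abs_mul, abs_of_pos hC, List.sum_map_mul_left,
      inv_mul_le_iff₀ hC] using hl a
  have h := sum_abs_le_toReal_fblNormA hfin hadm
  simp only [List.map_map, Function.comp_def, hf _ (inv_nonneg.mpr hC.le), abs_mul,
    abs_of_pos (inv_pos.mpr hC), List.sum_map_mul_left] at h
  rwa [inv_mul_le_iff₀ hC, mul_comm] at h

theorem le_toReal_fblNormA_mul_norm (hf : PosHomA f) (hfin : fblNormA f < ∞)
    (x : ℓ^∞(A, ℝ)) : f x ≤ (fblNormA f).toReal * ‖x‖ := by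
  rcases eq_or_ne x 0 with rfl | hx
  · simp [hf.map_zero]
  · have h := sum_abs_le_toReal_fblNormA_mul hf hfin (l := [x]) (norm_pos_iff.mpr hx)
      fun a => by simpa using lp.abs_apply_le_norm x a
    simp only [List.map_cons, List.map_nil, List.sum_cons, List.sum_nil, add_zero] at h
    exact (le_abs_self _).trans h

theorem MaximalA.eq_of_le (hf : MaximalA f) (hg : PosHomA g) (hg₀ : ∀ x, 0 ≤ g x)
    (hfg : ∀ x, f x ≤ g x)
    (hbound : ∀ l, AdmissibleA l → (l.map g).sum ≤ (fblNormA f).toReal) : g = f := by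
  obtain ⟨-, hf₀, hfin, hmax⟩ := hf
  have habs (x : ℓ^∞(A, ℝ)) : |g x| = g x := abs_of_nonneg (hg₀ x)
  have hle : fblNormA g ≤ fblNormA f := iSup_le fun l =>
    ENNReal.ofReal_le_of_le_toReal (by simpa only [habs] using hbound l.1 l.2)
  have hge : fblNormA f ≤ fblNormA g := iSup_mono fun l =>
    ENNReal.ofReal_le_ofReal <| List.sum_le_sum fun x _ => by
      rw [habs, abs_of_nonneg (hf₀ x)]
      exact hfg x
  exact hmax g hg hg₀ (hle.trans_lt hfin) hfg (le_antisymm hle hge)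

theorem MaximalA.posHomA (hf : MaximalA f) : PosHomA f := hf.1

theorem MaximalA.nonneg (hf : MaximalA f) (x : ℓ^∞(A, ℝ)) : 0 ≤ f x := hf.2.1 x

theorem MaximalA.fblNormA_lt_top (hf : MaximalA f) : fblNormA f < ∞ := hf.2.2.1

def dominatedSums (f : ℓ^∞(A, ℝ) → ℝ) (x : ℓ^∞(A, ℝ)) : Set ℝ :=
  {s | ∃ l : List ℓ^∞(A, ℝ), (∀ a, (l.map fun y => |y a|).sum ≤ |x a|) ∧ (l.map f).sum = s}

def dominatedSumsSup (f : ℓ^∞(A, ℝ) → ℝ) (x : ℓ^∞(A, ℝ)) : ℝ :=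
  sSup (dominatedSums f x)

theorem zero_mem_dominatedSums (f : ℓ^∞(A, ℝ) → ℝ) (x : ℓ^∞(A, ℝ)) : 0 ∈ dominatedSums f x :=
  ⟨[], fun a => by simp, rfl⟩

theorem bddAbove_dominatedSums (hf : PosHomA f) (hfin : fblNormA f < ∞) (x : ℓ^∞(A, ℝ)) :
    BddAbove (dominatedSums f x) := by
  refine ⟨(fblNormA f).toReal * max ‖x‖ 1, ?_⟩
  rintro _ ⟨l, hl, rfl⟩
  exact (List.sum_le_sum fun y _ => le_abs_self (f y)).trans <|
    sum_abs_le_toReal_fblNormA_mul hf hfin (lt_max_of_lt_right one_pos) fun a =>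
      (hl a).trans <| (lp.abs_apply_le_norm x a).trans (le_max_left _ _)

theorem le_dominatedSumsSup (hf : PosHomA f) (hfin : fblNormA f < ∞) (x : ℓ^∞(A, ℝ)) :
    f x ≤ dominatedSumsSup f x :=
  le_csSup (bddAbove_dominatedSums hf hfin x) ⟨[x], fun a => by simp, by simp⟩

theorem dominatedSumsSup_nonneg (hf : PosHomA f) (hfin : fblNormA f < ∞) (x : ℓ^∞(A, ℝ)) :
    0 ≤ dominatedSumsSup f x :=
  le_csSup (bddAbove_dominatedSums hf hfin x) (zero_mem_dominatedSums f x)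

theorem smul_mem_dominatedSums (hf : PosHomA f) {c : ℝ} (hc : 0 ≤ c) {x : ℓ^∞(A, ℝ)} {s : ℝ}
    (hs : s ∈ dominatedSums f x) : c • s ∈ dominatedSums f (c • x) := by
  obtain ⟨l, hl, rfl⟩ := hs
  refine ⟨l.map (c • ·), fun a => ?_, ?_⟩
  · simpa [Function.comp_def, abs_mul, abs_of_nonneg hc, List.sum_map_mul_left] using
      mul_le_mul_of_nonneg_left (hl a) hc
  · simp [Function.comp_def, hf c hc, List.sum_map_mul_left]

theorem posHomA_dominatedSumsSup (hf : PosHomA f) (hfin : fblNormA f < ∞) :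
    PosHomA (dominatedSumsSup f) :=
  posHomA_of_mul_le (dominatedSumsSup_nonneg hf hfin) fun c hc x => by
    rw [dominatedSumsSup, ← smul_eq_mul, ← Real.sSup_smul_of_nonneg hc]
    exact csSup_le_csSup (bddAbove_dominatedSums hf hfin _)
      (Set.Nonempty.smul_set ⟨0, zero_mem_dominatedSums f x⟩)
      (Set.smul_set_subset_iff.mpr fun s hs => smul_mem_dominatedSums hf hc hs)

/-- `L` collects the decompositions already chosen for the entries of the list before `l`. -/
theorem sum_dominatedSumsSup_le (hf : PosHomA f) (hfin : fblNormA f < ∞) :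
    ∀ l L : List ℓ^∞(A, ℝ),
      (∀ a, (L.map fun y => |y a|).sum + (l.map fun x => |x a|).sum ≤ 1) →
      (L.map f).sum + (l.map (dominatedSumsSup f)).sum ≤ (fblNormA f).toReal
  | [], L, h => by
    simpa using (List.sum_le_sum fun y _ => le_abs_self (f y)).trans
      (sum_abs_le_toReal_fblNormA hfin fun a => by simpa using h a)
  | x :: l, L, h => by
    have hx : dominatedSumsSup f x ≤
        (fblNormA f).toReal - (L.map f).sum - (l.map (dominatedSumsSup f)).sum := by
      refine csSup_le ⟨0, zero_mem_dominatedSums f x⟩ ?_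
      rintro _ ⟨lx, hlx, rfl⟩
      have h' := sum_dominatedSumsSup_le hf hfin l (L ++ lx) fun a => by
        simp only [List.map_append, List.sum_append]
        linarith [h a, hlx a, show ((x :: l).map fun x => |x a|).sum =
          |x a| + (l.map fun x => |x a|).sum from List.sum_cons]
      simp only [List.map_append, List.sum_append] at h'
      linarith
    simp only [List.map_cons, List.sum_cons]
    linarith

theorem MaximalA.dominatedSumsSup_eq (hf : MaximalA f) : dominatedSumsSup f = f := by
  have hhom := hf.posHomA
  have hfin := hf.fblNormA_lt_top
  refine hf.eq_of_le (posHomA_dominatedSumsSup hhom hfin) (dominatedSumsSup_nonneg hhom hfin)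
    (le_dominatedSumsSup hhom hfin) fun l hl => ?_
  simpa using sum_dominatedSumsSup_le hhom hfin l [] fun a => by
    rw [List.map_nil, List.sum_nil, zero_add]
    exact hl a

theorem MaximalA.sum_le_of_dominated (hf : MaximalA f) {x : ℓ^∞(A, ℝ)} {l : List ℓ^∞(A, ℝ)}
    (hl : ∀ a, (l.map fun y => |y a|).sum ≤ |x a|) : (l.map f).sum ≤ f x := by
  rw [← congrFun hf.dominatedSumsSup_eq x]
  exact le_csSup (bddAbove_dominatedSums hf.posHomA hf.fblNormA_lt_top x) ⟨l, hl, rfl⟩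

theorem MaximalA.le_lpAbs (hf : MaximalA f) (x : ℓ^∞(A, ℝ)) : f x ≤ f (lpAbs x) := by
  simpa using hf.sum_le_of_dominated (x := lpAbs x) (l := [x]) fun a => by simp [lpAbs_apply]

theorem MaximalA.superadditive (hf : MaximalA f) {p q : ℓ^∞(A, ℝ)} (hp : p ∈ lpNonnegCone A)
    (hq : q ∈ lpNonnegCone A) : f p + f q ≤ f (p + q) := by
  simpa using hf.sum_le_of_dominated (x := p + q) (l := [p, q]) fun a => by
    simp [abs_of_nonneg (hp a), abs_of_nonneg (hq a), abs_of_nonneg (add_nonneg (hp a) (hq a))]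

end Maximal

theorem List.exists_sublist_sum_map_max_eq {E 𝓕 : Type*} [AddCommMonoid E] [FunLike 𝓕 E ℝ]
    [AddMonoidHomClass 𝓕 E ℝ] (ψ : 𝓕) :
    ∀ l : List E, ∃ l' : List E, l'.Sublist l ∧ (l.map fun v => max (ψ v) 0).sum = ψ l'.sum
  | [] => ⟨[], List.Sublist.slnil, by simp⟩
  | v :: l => by
    obtain ⟨l', hl', h⟩ := exists_sublist_sum_map_max_eq ψ l
    rcases le_total 0 (ψ v) with hv | hv
    · exact ⟨v :: l', hl'.cons_cons v, by simp [max_eq_left hv, h]⟩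
    · exact ⟨l', hl'.cons v, by simp [max_eq_right hv, h]⟩

section Dual

variable {A : Type*} {f : ℓ^∞(A, ℝ) → ℝ}

theorem MaximalA.eq_max_dual (hf : MaximalA f) {ψ : StrongDual ℝ ℓ^∞(A, ℝ)}
    (hψ : ‖ψ‖ ≤ (fblNormA f).toReal) (hfψ : ∀ p ∈ lpNonnegCone A, f p ≤ max (ψ p) 0)
    (x : ℓ^∞(A, ℝ)) : f x = max (ψ (lpAbs x)) 0 := by
  refine (congrFun (hf.eq_of_le (g := fun x => max (ψ (lpAbs x)) 0) (fun c hc x => ?_)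
    (fun _ => le_max_right _ _) (fun x => (hf.le_lpAbs x).trans
      (hfψ _ (lpAbs_mem_lpNonnegCone x))) fun l hl => ?_) x).symm
  · simp only [lpAbs_smul hc, map_smul, smul_eq_mul, mul_max_of_nonneg _ _ hc, mul_zero]
  · obtain ⟨l', hl', heq⟩ := (l.map lpAbs).exists_sublist_sum_map_max_eq ψ
    rw [List.map_map] at heq
    have hnorm : ‖l'.sum‖ ≤ 1 := by
      refine lp.norm_le_of_forall_le zero_le_one fun a => ?_
      rw [Real.norm_eq_abs, lp.list_sum_apply]
      calc |(l'.map fun y => y a).sum| ≤ (l'.map fun y => |y a|).sum := by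
            simpa [Function.comp_def] using
              Multiset.abs_sum_le_sum_abs (s := (l'.map fun y => y a : Multiset ℝ))
        _ ≤ ((l.map lpAbs).map fun y => |y a|).sum :=
            (hl'.map _).sum_le_sum fun _ h => by
              obtain ⟨y, -, rfl⟩ := List.mem_map.mp h
              exact abs_nonneg _
        _ ≤ 1 := by simpa [Function.comp_def, lpAbs_apply] using hl a
    calc (l.map _).sum = ψ l'.sum := heq
      _ ≤ ‖ψ‖ * ‖l'.sum‖ := (le_abs_self _).trans (ψ.le_opNorm _)
      _ ≤ (fblNormA f).toReal := by
        simpa using mul_le_mul hψ hnorm (norm_nonneg _) ENNReal.toReal_nonneg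

theorem MaximalA.exists_dual_eq_max (hf : MaximalA f) :
    ∃ ψ : StrongDual ℝ ℓ^∞(A, ℝ), ∀ x, f x = max (ψ (lpAbs x)) 0 := by
  have hhom : ∀ p ∈ lpNonnegCone A, ∀ c : ℝ, 0 ≤ c → f (c • p) = c * f p :=
    fun p _ c hc => hf.posHomA c hc p
  obtain ⟨ψ, hψ, hfψ⟩ := exists_dual_le_max_of_concaveOn ENNReal.toReal_nonneg
    (concaveOn_of_superadditive hhom fun p hp q hq => hf.superadditive hp hq) hhom
    fun p _ => le_toReal_fblNormA_mul_norm hf.posHomA hf.fblNormA_lt_top p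
  exact ⟨ψ, hf.eq_max_dual hψ hfψ⟩

end Dual

theorem stmt13_general {A : Type*} (f : lp (fun _ : A => ℝ) ⊤ → ℝ)
    (hf : MaximalA f) :
    ∃ φ : lp (fun _ : A => ℝ) ⊤ →L[ℝ] ℝ, ∀ x, f x = |φ (lpAbs x)| := by
  obtain ⟨ψ, hψ⟩ := hf.exists_dual_eq_max
  have hcone : ∀ p ∈ lpNonnegCone A, f p = max (ψ p) 0 := fun p hp => by
    rw [hψ, lpAbs_eq_self hp]
  have hadd : ∀ p ∈ lpNonnegCone A, ∀ q ∈ lpNonnegCone A, f (p + q) = f p + f q :=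
    fun p hp q hq => le_antisymm
      (by simpa [hcone p hp, hcone q hq, hcone _ (add_mem hp hq)] using
        max_add_add_le_max_add_max (a := ψ p) (b := ψ q) (c := 0) (d := 0))
      (hf.superadditive hp hq)
  obtain ⟨φ, hφ⟩ := exists_dual_eq_on_lpNonnegCone (fun p _ c hc => hf.posHomA c hc p) hadd
    fun p _ => hf.nonneg p
  refine ⟨φ, fun x => ?_⟩
  rw [hφ _ (lpAbs_mem_lpNonnegCone x), abs_of_nonneg (hf.nonneg _), hψ (lpAbs x), lpAbs_lpAbs,
    ← hψ]

/-- every maximal element of `H_0[ℓ1(A)]_+` is of the form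
`g_φ(x*) = |φ(|x*|)|` for a bounded linear functional `φ` on `ℓ∞(A)`. -/
theorem stmt13 {A : Type*} [Nonempty A] (f : lp (fun _ : A => ℝ) ⊤ → ℝ)
    (hf : MaximalA f) :
    ∃ φ : lp (fun _ : A => ℝ) ⊤ →L[ℝ] ℝ, ∀ x, f x = |φ (lpAbs x)| :=
  stmt13_general f hf
end
end

section
/- Let E be a Banach space, X a Banach lattice, and T : E → X a bounded operator. Then there exists a unique lattice homomorphism T̂ : FBL[E] → X with T̂(δ_x) = T(x) for all x ∈ E, and moreover ||T̂|| = ||T||. -/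
open scoped ENNReal

noncomputable section

/-- `f : E* → ℝ` is positively homogeneous. -/
def PosHom {E : Type*} [NormedAddCommGroup E] [NormedSpace ℝ E]
    (f : StrongDual ℝ E → ℝ) : Prop :=
  ∀ (c : ℝ), 0 ≤ c → ∀ x, f (c • x) = c * f x

/-- A finite list of functionals `x_1*, …, x_n*` with `sup_{x ∈ B_E} Σ |x_k*(x)| ≤ 1`. -/
def Admissible {E : Type*} [NormedAddCommGroup E] [NormedSpace ℝ E]
    (l : List (StrongDual ℝ E)) : Prop :=
  ∀ x : E, ‖x‖ ≤ 1 → (l.map (fun φ => |φ x|)).sum ≤ 1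

/-- The free Banach lattice norm `‖f‖_{FBL[E]}` (possibly infinite). -/
def fblNorm {E : Type*} [NormedAddCommGroup E] [NormedSpace ℝ E]
    (f : StrongDual ℝ E → ℝ) : ℝ≥0∞ :=
  ⨆ l : {l : List (StrongDual ℝ E) // Admissible l},
    ENNReal.ofReal ((l.1.map (fun φ => |f φ|)).sum)

/-- The sublattice of `ℝ^{E*}` generated by the evaluations `δ_x`, `x ∈ E`. -/
inductive GenLat (E : Type*) [NormedAddCommGroup E] [NormedSpace ℝ E] :
    (StrongDual ℝ E → ℝ) → Prop
  | delta (x : E) : GenLat E (fun φ => φ x)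
  | add {f g} : GenLat E f → GenLat E g → GenLat E (f + g)
  | smul (c : ℝ) {f} : GenLat E f → GenLat E (c • f)
  | sup {f g} : GenLat E f → GenLat E g → GenLat E (f ⊔ g)

/-- Membership in `FBL[E]`: the `‖·‖_{FBL[E]}`-closure of the sublattice generated by
the evaluations `δ_x`. -/
def FBLMem {E : Type*} [NormedAddCommGroup E] [NormedSpace ℝ E]
    (f : StrongDual ℝ E → ℝ) : Prop :=
  ∀ ε : ℝ, 0 < ε → ∃ g, GenLat E g ∧ fblNorm (f - g) ≤ ENNReal.ofReal ε

/-!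
Every element of the sublattice generated by the evaluations `δ_x` has the form
`⋁_{a ∈ A} δ_a - ⋁_{b ∈ B} δ_b` for finite nonempty `A, B ⊆ E`, and a lattice homomorphism
extending `T` must send it to `⋁_{a ∈ A} T a - ⋁_{b ∈ B} T b`. This assignment is well defined
and `‖T‖`-Lipschitz for `‖·‖_{FBL[E]}`: test `z = ⋁ T a - ⋁ T b` against a positive norming
functional `y` of `|z|`, and split `y` along the supremum by the Riesz–Kantorovich formula
`y (⋁ u_a) = Σ y_a (u_a)` with `0 ≤ y_a`, `Σ y_a = y`. The functionals `y_a ∘ T / ‖T‖` then form an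
admissible family, so `‖z‖ ≤ ‖T‖ ‖⋁ δ_a - ⋁ δ_b‖_{FBL[E]}`. Since `X` is complete, the map
extends to the closure `FBL[E]`; linearity, preservation of `⊔` and the norm bound pass to the
limit, `‖T‖ ≤ ‖T̂‖` is read off at `δ_x`, and a bounded lattice homomorphism is determined by its
values on the dense sublattice.
-/

open Filter Topology
open scoped Pointwise

theorem inv_two_pow_smul_nonneg {Y : Type*} [Lattice Y] [AddCommGroup Y] [IsOrderedAddMonoid Y]
    [Module ℝ Y] {x : Y} (hx : 0 ≤ x) (n : ℕ) : 0 ≤ ((2 : ℝ) ^ n)⁻¹ • x := by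
  induction n with
  | zero => simpa using hx
  | succ n ih =>
    refine nsmul_two_semiclosed ?_
    rwa [← Nat.cast_smul_eq_nsmul ℝ, smul_smul, pow_succ', mul_inv, Nat.cast_ofNat,
      mul_inv_cancel_left₀ two_ne_zero]

/-- `X` is not assumed to be an ordered module: `0 ≤ c • x` follows from `0 ≤ 2 • a → 0 ≤ a`
(for dyadic `c`) and the closedness of the positive cone. -/
instance HasSolidNorm.posSMulMono {X : Type*} [NormedAddCommGroup X] [Lattice X] [HasSolidNorm X]
    [IsOrderedAddMonoid X] [NormedSpace ℝ X] :
    PosSMulMono ℝ X := .of_smul_nonneg fun c hc x hx => by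
  have hlim : Tendsto (fun n : ℕ => ((⌊c * 2 ^ n⌋₊ : ℝ) / 2 ^ n) • x) atTop (𝓝 (c • x)) :=
    ((tendsto_nat_floor_mul_div_atTop hc).comp
      (tendsto_pow_atTop_atTop_of_one_lt one_lt_two)).smul_const x
  refine isClosed_nonneg.mem_of_tendsto hlim (Eventually.of_forall fun n => ?_)
  rw [div_eq_mul_inv, mul_smul, Nat.cast_smul_eq_nsmul]
  exact nsmul_nonneg (inv_two_pow_smul_nonneg hx n) _

section SMulSup

variable {𝕜 Y : Type*} [Field 𝕜] [LinearOrder 𝕜] [IsStrictOrderedRing 𝕜] [Lattice Y]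
  [AddCommGroup Y] [Module 𝕜 Y] [PosSMulMono 𝕜 Y]

theorem smul_sup_of_nonneg {c : 𝕜} (hc : 0 ≤ c) (a b : Y) : c • (a ⊔ b) = c • a ⊔ c • b := by
  rcases hc.eq_or_lt with rfl | hc
  · simp
  · exact (OrderIso.smulRight hc).map_sup a b

theorem Finset.smul_sup'_of_nonneg {ι : Type*} {c : 𝕜} (hc : 0 ≤ c) {s : Finset ι}
    (hs : s.Nonempty) (f : ι → Y) : c • s.sup' hs f = s.sup' hs (fun i => c • f i) := by
  rcases hc.eq_or_lt with rfl | hc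
  · simp
  · exact map_finset_sup' (OrderIso.smulRight hc) hs f

theorem posPart_smul_of_nonneg [IsOrderedAddMonoid Y] {c : 𝕜} (hc : 0 ≤ c) (a : Y) :
    (c • a)⁺ = c • a⁺ := by
  rw [posPart_def, posPart_def, smul_sup_of_nonneg hc, smul_zero]

end SMulSup

theorem posPart_add_le {Y : Type*} [Lattice Y] [AddCommGroup Y] [IsOrderedAddMonoid Y] (a b : Y) :
    (a + b)⁺ ≤ a⁺ + b⁺ :=
  sup_le (add_le_add (le_posPart a) (le_posPart b))
    (add_nonneg (posPart_nonneg a) (posPart_nonneg b))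

theorem Finset.sup'_add_eq_add_sup' {E Y : Type*} [Add E] [DecidableEq E] [Lattice Y]
    [AddCommGroup Y] [IsOrderedAddMonoid Y] {F : Type*} [FunLike F E Y] [AddHomClass F E Y] (S : F)
    {s t : Finset E} (hs : s.Nonempty) (ht : t.Nonempty) :
    (s + t).sup' (hs.add ht) S = s.sup' hs S + t.sup' ht S := by
  refine le_antisymm (Finset.sup'_le _ _ fun z hz => ?_) ?_
  · obtain ⟨a, ha, b, hb, rfl⟩ := Finset.mem_add.1 hz
    rw [map_add]
    exact add_le_add (Finset.le_sup' S ha) (Finset.le_sup' S hb)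
  · rw [← le_sub_iff_add_le]
    refine Finset.sup'_le _ _ fun a ha => ?_
    rw [le_sub_iff_add_le, ← le_sub_iff_add_le']
    refine Finset.sup'_le _ _ fun b hb => ?_
    rw [le_sub_iff_add_le', ← map_add]
    exact Finset.le_sup' S (Finset.add_mem_add ha hb)

theorem Finset.sup'_smul_finset_eq_smul_sup' {E Y : Type*} [AddCommGroup E] [Module ℝ E]
    [DecidableEq E] [Lattice Y] [AddCommGroup Y] [Module ℝ Y] [PosSMulMono ℝ Y] {F : Type*}
    [FunLike F E Y] [LinearMapClass F ℝ E Y] (S : F) {c : ℝ} (hc : 0 ≤ c) {s : Finset E} (hs : s.Nonempty) :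
    (c • s).sup' hs.smul_finset S = c • s.sup' hs S := by
  change (s.image (c • ·)).sup' _ S = _
  rw [Finset.sup'_image, Finset.smul_sup'_of_nonneg hc]
  simp

theorem sub_sup_sub_eq_sup_add_sub {Y : Type*} [Lattice Y] [AddCommGroup Y] [IsOrderedAddMonoid Y]
    (a b a' b' : Y) : (a - b) ⊔ (a' - b') = (a + b') ⊔ (a' + b) - (b + b') := by
  rw [eq_sub_iff_add_eq, sup_add]
  congr 1 <;> abel

theorem exists_linearMap_le_sublinear_apply_eq {V : Type*} [AddCommGroup V] [Module ℝ V]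
    (N : V → ℝ) (N_hom : ∀ c : ℝ, 0 < c → ∀ x, N (c • x) = c * N x)
    (N_add : ∀ x y, N (x + y) ≤ N x + N y) (v : V) :
    ∃ g : V →ₗ[ℝ] ℝ, (∀ x, g x ≤ N x) ∧ g v = N v := by
  have N_zero : N 0 = 0 := by
    have := N_hom 2 two_pos 0
    rw [smul_zero] at this
    linarith
  have hcompat : ∀ c : ℝ, c • v = 0 → c • N v = 0 := fun c hc => by
    rcases smul_eq_zero.1 hc with rfl | rfl <;> simp [N_zero]
  set f := LinearPMap.mkSpanSingleton' (σ := RingHom.id ℝ) v (N v) hcompat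
  have hv : v ∈ f.domain := Submodule.mem_span_singleton_self v
  have hf : ∀ x : f.domain, f x ≤ N x := by
    rintro ⟨_, hx⟩
    obtain ⟨c, rfl⟩ := Submodule.mem_span_singleton.1 hx
    rw [LinearPMap.mkSpanSingleton'_apply, smul_eq_mul, RingHom.id_apply]
    change c * N v ≤ N (c • v)
    rcases lt_trichotomy c 0 with hc | rfl | hc
    · have : 0 ≤ N v + N (-v) := by simpa [N_zero] using N_add v (-v)
      rw [show c • v = (-c) • -v by simp, N_hom _ (neg_pos.2 hc)]
      nlinarith
    · simp [N_zero]
    · rw [N_hom c hc]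
  obtain ⟨g, hgf, hgN⟩ := exists_extension_of_le_sublinear f N N_hom N_add hf
  exact ⟨g, hgN, (hgf ⟨v, hv⟩).trans (LinearPMap.mkSpanSingleton'_apply_self _ _ _ _)⟩

section RieszKantorovich

variable {Y : Type*} [Lattice Y] [AddCommGroup Y] [IsOrderedAddMonoid Y] [Module ℝ Y]
  [PosSMulMono ℝ Y]

theorem LinearMap.exists_monotone_add_eq_apply_sup (y : Y →ₗ[ℝ] ℝ) (hy : Monotone y) (u v : Y) :
    ∃ y₁ y₂ : Y →ₗ[ℝ] ℝ, Monotone y₁ ∧ Monotone y₂ ∧ y₁ + y₂ = y ∧ y₁ u + y₂ v = y (u ⊔ v) := by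
  obtain ⟨g, hgN, hguv⟩ := exists_linearMap_le_sublinear_apply_eq
    (fun p : Y × Y => y (p.1 ⊔ p.2)) (fun c hc p => by simp [← smul_sup_of_nonneg hc.le])
    (fun p q => by
      rw [← map_add]
      exact hy (sup_le (add_le_add le_sup_left le_sup_left) (add_le_add le_sup_right le_sup_right)))
    (u, v)
  have hdiag : ∀ w, g (w, w) = y w := fun w => by
    have h₁ := hgN (w, w)
    have h₂ := hgN (-(w, w))
    simp only [map_neg, Prod.fst_neg, Prod.snd_neg, sup_idem] at h₁ h₂
    linarith
  have hsplit : ∀ a b : Y, g (a, 0) + g (0, b) = g (a, b) := fun a b => by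
    rw [← map_add, Prod.mk_add_mk, add_zero, zero_add]
  refine ⟨g ∘ₗ LinearMap.inl ℝ Y Y, g ∘ₗ LinearMap.inr ℝ Y Y, ?_, ?_, ?_, ?_⟩
  · refine (monotone_iff_map_nonneg _).2 fun a ha => ?_
    have := hgN (-(a, 0))
    simp only [map_neg, Prod.fst_neg, Prod.snd_neg, neg_zero, sup_eq_right.2 (neg_nonpos.2 ha),
      map_zero, neg_nonpos] at this
    exact this
  · refine (monotone_iff_map_nonneg _).2 fun a ha => ?_
    have := hgN (-(0, a))
    simp only [map_neg, Prod.fst_neg, Prod.snd_neg, neg_zero, sup_eq_left.2 (neg_nonpos.2 ha),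
      map_zero, neg_nonpos] at this
    exact this
  · ext w
    simp [hsplit, hdiag]
  · simpa [hsplit] using hguv

theorem LinearMap.exists_monotone_sum_eq_apply_sup' {ι : Type*} (y : Y →ₗ[ℝ] ℝ) (hy : Monotone y)
    {s : Finset ι} (hs : s.Nonempty) (u : ι → Y) :
    ∃ g : ι → Y →ₗ[ℝ] ℝ, (∀ i, Monotone (g i)) ∧ (∀ i, Monotone (y - g i)) ∧ ∑ i ∈ s, g i = y ∧
      ∑ i ∈ s, g i (u i) = y (s.sup' hs u) := by
  classical
  induction hs using Finset.Nonempty.cons_induction generalizing y with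
  | singleton a =>
    exact ⟨fun _ => y, fun _ => hy, fun _ => by rw [sub_self]; exact monotone_const, by simp,
      by simp⟩
  | cons a s ha hs ih =>
    obtain ⟨y₁, y₂, hy₁, hy₂, hsum, hval⟩ :=
      y.exists_monotone_add_eq_apply_sup hy (u a) (s.sup' hs u)
    obtain ⟨g, hg, hg_le, hgsum, hgval⟩ := ih y₂ hy₂
    have hgs : ∀ i ∈ s, Function.update g a y₁ i = g i := fun i hi =>
      Function.update_of_ne (ne_of_mem_of_not_mem hi ha) _ _
    refine ⟨Function.update g a y₁, fun i => ?_, fun i => ?_, ?_, ?_⟩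
    · rcases eq_or_ne i a with rfl | hi
      · rw [Function.update_self]; exact hy₁
      · rw [Function.update_of_ne hi]; exact hg i
    · rcases eq_or_ne i a with rfl | hi
      · rw [Function.update_self, ← hsum, add_sub_cancel_left]; exact hy₂
      · rw [Function.update_of_ne hi, ← hsum, add_sub_assoc]; exact hy₁.add (hg_le i)
    · rw [Finset.sum_cons, Function.update_self, Finset.sum_congr rfl hgs, hgsum, hsum]
    · rw [Finset.sum_cons, Function.update_self, Finset.sum_congr rfl fun i hi => by rw [hgs i hi],
        hgval, hval, Finset.sup'_cons]

end RieszKantorovich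

theorem LinearMap.abs_apply_le_apply_abs {Y : Type*} [Lattice Y] [AddCommGroup Y]
    [IsOrderedAddMonoid Y] [Module ℝ Y] {g : Y →ₗ[ℝ] ℝ} (hg : Monotone g) (w : Y) :
    |g w| ≤ g |w| :=
  abs_le.2 ⟨by simpa using hg (neg_le.1 (neg_le_abs w)), hg (le_abs_self w)⟩

theorem exists_monotone_le_norm_apply_eq {X : Type*} [NormedAddCommGroup X] [Lattice X]
    [HasSolidNorm X] [IsOrderedAddMonoid X] [NormedSpace ℝ X] {v : X} (hv : 0 ≤ v) :
    ∃ y : X →ₗ[ℝ] ℝ, Monotone y ∧ (∀ x, y x ≤ ‖x‖) ∧ y v = ‖v‖ := by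
  have norm_le_of_le : ∀ a b : X, 0 ≤ a → a ≤ b → ‖a‖ ≤ ‖b‖ := fun a b ha hab =>
    norm_le_norm_of_abs_le_abs (by rwa [abs_of_nonneg ha, abs_of_nonneg (ha.trans hab)])
  obtain ⟨y, hyN, hyv⟩ := exists_linearMap_le_sublinear_apply_eq (fun w : X => ‖w⁺‖)
    (fun c hc w => by rw [posPart_smul_of_nonneg hc.le, norm_smul, Real.norm_of_nonneg hc.le])
    (fun a b => (norm_le_of_le _ _ (posPart_nonneg _) (posPart_add_le a b)).trans
      (norm_add_le _ _))
    v
  refine ⟨y, (monotone_iff_map_nonneg _).2 fun a ha => ?_, fun x => ?_, ?_⟩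
  · have := hyN (-a)
    rwa [posPart_eq_zero.2 (neg_nonpos.2 ha), norm_zero, map_neg, neg_nonpos] at this
  · exact (hyN x).trans <| (norm_le_of_le _ _ (posPart_nonneg x)
      (sup_le (le_abs_self x) (abs_nonneg x))).trans (norm_abs_eq_norm x).le
  · rw [hyv, posPart_eq_self.2 hv]

structure SupDiff (E : Type*) where
  pos : Finset E
  neg : Finset E
  pos_nonempty : pos.Nonempty
  neg_nonempty : neg.Nonempty

namespace SupDiff

variable {E Y : Type*}

def eval [SemilatticeSup Y] [Sub Y] (r : SupDiff E) (S : E → Y) : Y :=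
  r.pos.sup' r.pos_nonempty S - r.neg.sup' r.neg_nonempty S

def of [Zero E] (x : E) : SupDiff E :=
  ⟨{x}, {0}, Finset.singleton_nonempty x, Finset.singleton_nonempty 0⟩

instance : Neg (SupDiff E) := ⟨fun r => ⟨r.neg, r.pos, r.neg_nonempty, r.pos_nonempty⟩⟩

section Ops

variable [DecidableEq E]

instance [Add E] : Add (SupDiff E) :=
  ⟨fun r s => ⟨r.pos + s.pos, r.neg + s.neg, r.pos_nonempty.add s.pos_nonempty,
    r.neg_nonempty.add s.neg_nonempty⟩⟩

instance [Add E] : Sub (SupDiff E) := ⟨fun r s => r + -s⟩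

instance [Add E] : Max (SupDiff E) :=
  ⟨fun r s => ⟨(r.pos + s.neg) ∪ (s.pos + r.neg), r.neg + s.neg,
    (r.pos_nonempty.add s.neg_nonempty).mono Finset.subset_union_left,
    r.neg_nonempty.add s.neg_nonempty⟩⟩

instance [SMul ℝ E] : SMul ℝ (SupDiff E) :=
  ⟨fun c r => if 0 ≤ c then
      ⟨c • r.pos, c • r.neg, r.pos_nonempty.smul_finset, r.neg_nonempty.smul_finset⟩
    else ⟨(-c) • r.neg, (-c) • r.pos, r.neg_nonempty.smul_finset, r.pos_nonempty.smul_finset⟩⟩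

end Ops

variable [Lattice Y] [AddCommGroup Y]

theorem eval_neg (r : SupDiff E) (S : E → Y) : (-r).eval S = -r.eval S :=
  (neg_sub _ _).symm

theorem eval_smul_fun [Module ℝ Y] [PosSMulMono ℝ Y] (r : SupDiff E) {c : ℝ} (hc : 0 ≤ c)
    (S : E → Y) : r.eval (c • S) = c • r.eval S := by
  simp only [eval, smul_sub, Finset.smul_sup'_of_nonneg hc, Pi.smul_apply]

theorem eval_of [AddCommGroup E] {F : Type*} [FunLike F E Y] [AddMonoidHomClass F E Y] (S : F)
    (x : E) : (of x).eval S = S x := by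
  simp [eval, of]

section Ops

variable [IsOrderedAddMonoid Y] [DecidableEq E] [Add E] {F : Type*} [FunLike F E Y]
  [AddHomClass F E Y]

theorem eval_add (r s : SupDiff E) (S : F) : (r + s).eval S = r.eval S + s.eval S := by
  change (r.pos + s.pos).sup' _ S - (r.neg + s.neg).sup' _ S = _
  rw [Finset.sup'_add_eq_add_sup' S r.pos_nonempty s.pos_nonempty,
    Finset.sup'_add_eq_add_sup' S r.neg_nonempty s.neg_nonempty, eval, eval]
  abel

theorem eval_sub (r s : SupDiff E) (S : F) : (r - s).eval S = r.eval S - s.eval S := by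
  rw [sub_eq_add_neg, ← eval_neg]
  exact eval_add r (-s) S

theorem eval_sup (r s : SupDiff E) (S : F) : (r ⊔ s).eval S = r.eval S ⊔ s.eval S := by
  change ((r.pos + s.neg) ∪ (s.pos + r.neg)).sup' _ S - (r.neg + s.neg).sup' _ S = _
  rw [Finset.sup'_union (r.pos_nonempty.add s.neg_nonempty) (s.pos_nonempty.add r.neg_nonempty),
    Finset.sup'_add_eq_add_sup', Finset.sup'_add_eq_add_sup', Finset.sup'_add_eq_add_sup', eval,
    eval, sub_sup_sub_eq_sup_add_sub]

end Ops

theorem eval_smul [AddCommGroup E] [Module ℝ E] [DecidableEq E] [Module ℝ Y] [PosSMulMono ℝ Y]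
    (c : ℝ) (r : SupDiff E) {F : Type*} [FunLike F E Y] [LinearMapClass F ℝ E Y] (S : F) :
    (c • r).eval S = c • r.eval S := by
  by_cases hc : 0 ≤ c
  · change (if 0 ≤ c then _ else _ : SupDiff E).eval S = _
    rw [if_pos hc, eval, eval, Finset.sup'_smul_finset_eq_smul_sup' S hc,
      Finset.sup'_smul_finset_eq_smul_sup' S hc, smul_sub]
  · change (if 0 ≤ c then _ else _ : SupDiff E).eval S = _
    have hc' : 0 ≤ -c := by linarith
    rw [if_neg hc, eval, eval, Finset.sup'_smul_finset_eq_smul_sup' S hc',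
      Finset.sup'_smul_finset_eq_smul_sup' S hc', ← smul_sub, neg_smul, ← smul_neg, neg_sub]

end SupDiff

section FBLNorm

variable {E : Type*} [NormedAddCommGroup E] [NormedSpace ℝ E]

theorem ofReal_sum_le_fblNorm {l : List (StrongDual ℝ E)} (hl : Admissible l)
    (f : StrongDual ℝ E → ℝ) : ENNReal.ofReal (l.map fun φ => |f φ|).sum ≤ fblNorm f :=
  le_iSup (fun l : {l // Admissible l} => ENNReal.ofReal (l.1.map fun φ => |f φ|).sum) ⟨l, hl⟩

theorem fblNorm_le_add_of_abs_le {f g h : StrongDual ℝ E → ℝ}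
    (hfgh : ∀ φ, |f φ| ≤ |g φ| + |h φ|) : fblNorm f ≤ fblNorm g + fblNorm h :=
  iSup_le fun l => calc
    ENNReal.ofReal (l.1.map fun φ => |f φ|).sum
      ≤ ENNReal.ofReal ((l.1.map fun φ => |g φ|).sum + (l.1.map fun φ => |h φ|).sum) :=
        ENNReal.ofReal_le_ofReal <| by
          rw [← List.sum_map_add]
          exact List.sum_le_sum fun φ _ => hfgh φ
    _ ≤ _ := ENNReal.ofReal_add_le.trans
        (add_le_add (ofReal_sum_le_fblNorm l.2 g) (ofReal_sum_le_fblNorm l.2 h))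

@[simp]
theorem fblNorm_zero : fblNorm (0 : StrongDual ℝ E → ℝ) = 0 := by
  simp [fblNorm]

theorem fblNorm_smul (c : ℝ) (f : StrongDual ℝ E → ℝ) : fblNorm (c • f) = ‖c‖ₑ * fblNorm f := by
  simp only [fblNorm, ENNReal.mul_iSup, Real.enorm_eq_ofReal_abs,
    ← ENNReal.ofReal_mul (abs_nonneg c), ← List.sum_map_mul_left, Pi.smul_apply, smul_eq_mul,
    abs_mul]

theorem Admissible.sum_le {l : List (StrongDual ℝ E)} (hl : Admissible l) (x : E) :
    (l.map fun φ => |φ x|).sum ≤ ‖x‖ := by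
  rcases eq_or_ne x 0 with rfl | hx
  · simp
  · have hx' : 0 < ‖x‖ := norm_pos_iff.2 hx
    have := hl (‖x‖⁻¹ • x) (by rw [norm_smul, norm_inv, norm_norm, inv_mul_cancel₀ hx'.ne'])
    simp only [map_smul, smul_eq_mul, abs_mul, abs_inv, abs_norm, List.sum_map_mul_left] at this
    rwa [inv_mul_le_iff₀ hx', mul_one] at this

theorem fblNorm_delta_le (x : E) : fblNorm (fun φ : StrongDual ℝ E => φ x) ≤ ‖x‖ₑ :=
  iSup_le fun l => (ENNReal.ofReal_le_ofReal (l.2.sum_le x)).trans (ofReal_norm x).le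

theorem GenLat.fblNorm_ne_top {f : StrongDual ℝ E → ℝ} (hf : GenLat E f) : fblNorm f ≠ ⊤ := by
  induction hf with
  | delta x => exact ((fblNorm_delta_le x).trans_lt enorm_lt_top).ne
  | add _ _ hf hg =>
    exact ne_top_of_le_ne_top (ENNReal.add_ne_top.2 ⟨hf, hg⟩)
      (fblNorm_le_add_of_abs_le fun φ => abs_add_le _ _)
  | smul c _ hf => rw [fblNorm_smul]; exact ENNReal.mul_ne_top enorm_ne_top hf
  | @sup f g _ _ hf hg =>
    exact ne_top_of_le_ne_top (ENNReal.add_ne_top.2 ⟨hf, hg⟩)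
      (fblNorm_le_add_of_abs_le fun φ => norm_sup_le_add (f φ) (g φ))

theorem ofReal_sum_abs_le_mul_fblNorm {f : StrongDual ℝ E → ℝ} (hf : PosHom f) {ι : Type*}
    (s : Finset ι) (ψ : ι → StrongDual ℝ E) {K : ℝ} (hK : 0 ≤ K)
    (hψ : ∀ x, ∑ i ∈ s, |ψ i x| ≤ K * ‖x‖) :
    ENNReal.ofReal (∑ i ∈ s, |f (ψ i)|) ≤ ENNReal.ofReal K * fblNorm f := by
  rcases hK.eq_or_lt with rfl | hK
  · have hf0 : f 0 = 0 := by simpa using hf 0 le_rfl 0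
    have hψ0 : ∀ i ∈ s, ψ i = 0 := fun i hi => ContinuousLinearMap.ext fun x =>
      abs_nonpos_iff.1 <| (Finset.single_le_sum (fun j _ => abs_nonneg (ψ j x)) hi).trans
        (by simpa using hψ x)
    rw [Finset.sum_eq_zero fun i hi => by rw [hψ0 i hi, hf0, abs_zero]]
    simp
  · have hl : Admissible (s.toList.map fun i => K⁻¹ • ψ i) := fun x hx => by
      simp only [List.map_map, Function.comp_def, Finset.sum_map_toList,
        FunLike.coe_smul, Pi.smul_apply, smul_eq_mul, abs_mul, abs_inv, abs_of_pos hK,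
        ← Finset.mul_sum]
      rw [inv_mul_le_iff₀ hK]
      exact (hψ x).trans (mul_le_mul_of_nonneg_left hx hK.le)
    have := ofReal_sum_le_fblNorm hl f
    simp only [List.map_map, Function.comp_def, Finset.sum_map_toList, hf _ (inv_nonneg.2 hK.le),
      abs_mul, abs_inv, abs_of_pos hK, ← Finset.mul_sum] at this
    calc ENNReal.ofReal (∑ i ∈ s, |f (ψ i)|)
        = ENNReal.ofReal K * ENNReal.ofReal (K⁻¹ * ∑ i ∈ s, |f (ψ i)|) := by
          rw [← ENNReal.ofReal_mul hK.le, mul_inv_cancel_left₀ hK.ne']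
      _ ≤ ENNReal.ofReal K * fblNorm f := by gcongr

theorem GenLat.sub {u v : StrongDual ℝ E → ℝ} (hu : GenLat E u) (hv : GenLat E v) :
    GenLat E (u - v) := by
  simpa [sub_eq_add_neg] using hu.add (hv.smul (-1))

theorem GenLat.fblMem {u : StrongDual ℝ E → ℝ} (hu : GenLat E u) : FBLMem u :=
  fun _ _ => ⟨u, hu, by simp⟩

theorem FBLMem.sub_genLat {f u : StrongDual ℝ E → ℝ} (hf : FBLMem f) (hu : GenLat E u) :
    FBLMem (f - u) := fun ε hε => by
  obtain ⟨w, hw, hfw⟩ := hf ε hε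
  exact ⟨w - u, hw.sub hu, by rwa [sub_sub_sub_cancel_right]⟩

theorem FBLMem.fblNorm_ne_top {f : StrongDual ℝ E → ℝ} (hf : FBLMem f) : fblNorm f ≠ ⊤ := by
  obtain ⟨u, hu, hfu⟩ := hf 1 one_pos
  refine ne_top_of_le_ne_top (ENNReal.add_ne_top.2 ⟨ne_top_of_le_ne_top ENNReal.ofReal_ne_top hfu,
    hu.fblNorm_ne_top⟩) (fblNorm_le_add_of_abs_le fun φ => ?_)
  simpa using abs_add_le (f φ - u φ) (u φ)

end FBLNorm

theorem cauchySeq_of_edist_le_add {α : Type*} [PseudoEMetricSpace α] {u : ℕ → α} {a : ℕ → ℝ≥0∞}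
    (ha : Tendsto a atTop (𝓝 0)) (h : ∀ m n, edist (u m) (u n) ≤ a m + a n) : CauchySeq u := by
  refine EMetric.cauchySeq_iff'.2 fun ε hε => ?_
  obtain ⟨N, hN⟩ := eventually_atTop.1 ((tendsto_order.1 ha).2 (ε / 2) (ENNReal.half_pos hε.ne'))
  exact ⟨N, fun n hn => (h n N).trans_lt
    (ENNReal.add_halves ε ▸ ENNReal.add_lt_add (hN n hn) (hN N le_rfl))⟩

namespace FreeBanachLattice

variable {E : Type*} [NormedAddCommGroup E] [NormedSpace ℝ E]

variable (E) in
def delta : E →ₗ[ℝ] (StrongDual ℝ E → ℝ) where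
  toFun x φ := φ x
  map_add' x y := funext fun φ => map_add φ x y
  map_smul' c x := funext fun φ => map_smul φ c x

theorem eval_delta_apply (r : SupDiff E) (φ : StrongDual ℝ E) :
    r.eval (delta E) φ = r.eval φ := by
  simp only [SupDiff.eval, Pi.sub_apply, Finset.sup'_apply]
  rfl

theorem posHom_eval_delta (r : SupDiff E) : PosHom (r.eval (delta E)) := fun c hc φ => by
  rw [eval_delta_apply, eval_delta_apply, show ⇑(c • φ) = c • ⇑φ from rfl, r.eval_smul_fun hc,
    smul_eq_mul]

theorem _root_.GenLat.exists_eval_delta_eq {f : StrongDual ℝ E → ℝ} (hf : GenLat E f) :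
    ∃ r : SupDiff E, r.eval (delta E) = f := by
  classical
  induction hf with
  | delta x => exact ⟨SupDiff.of x, SupDiff.eval_of _ x⟩
  | add _ _ ihf ihg =>
    obtain ⟨r, rfl⟩ := ihf
    obtain ⟨s, rfl⟩ := ihg
    exact ⟨r + s, r.eval_add s _⟩
  | smul c _ ih =>
    obtain ⟨r, rfl⟩ := ih
    exact ⟨c • r, SupDiff.eval_smul c r _⟩
  | sup _ _ ihf ihg =>
    obtain ⟨r, rfl⟩ := ihf
    obtain ⟨s, rfl⟩ := ihg
    exact ⟨r ⊔ s, r.eval_sup s _⟩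

def IsGenApprox (f : StrongDual ℝ E → ℝ) (g : ℕ → StrongDual ℝ E → ℝ) : Prop :=
  (∀ n, GenLat E (g n)) ∧ Tendsto (fun n => fblNorm (f - g n)) atTop (𝓝 0)

theorem _root_.FBLMem.exists_isGenApprox {f : StrongDual ℝ E → ℝ} (hf : FBLMem f) :
    ∃ g, IsGenApprox f g := by
  choose g hg hfg using fun n : ℕ => hf (1 / (n + 1)) Nat.one_div_pos_of_nat
  refine ⟨g, hg, tendsto_of_tendsto_of_tendsto_of_le_of_le tendsto_const_nhds ?_
    (fun _ => zero_le) hfg⟩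
  simpa using ENNReal.tendsto_ofReal tendsto_one_div_add_atTop_nhds_zero_nat

namespace IsGenApprox

variable {f f₁ f₂ : StrongDual ℝ E → ℝ} {g g₁ g₂ : ℕ → StrongDual ℝ E → ℝ}

theorem of_abs_le (hg : ∀ n, GenLat E (g n)) (h₁ : IsGenApprox f₁ g₁) (h₂ : IsGenApprox f₂ g₂)
    (hle : ∀ n φ, |(f - g n) φ| ≤ |(f₁ - g₁ n) φ| + |(f₂ - g₂ n) φ|) : IsGenApprox f g :=
  ⟨hg, tendsto_of_tendsto_of_tendsto_of_le_of_le tendsto_const_nhds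
    (by simpa using h₁.2.add h₂.2) (fun _ => zero_le)
    fun n => fblNorm_le_add_of_abs_le (hle n)⟩

theorem add (h₁ : IsGenApprox f₁ g₁) (h₂ : IsGenApprox f₂ g₂) :
    IsGenApprox (f₁ + f₂) (g₁ + g₂) :=
  of_abs_le (fun n => (h₁.1 n).add (h₂.1 n)) h₁ h₂ fun n φ => by
    simpa [add_sub_add_comm] using abs_add_le (f₁ φ - g₁ n φ) (f₂ φ - g₂ n φ)

theorem sup (h₁ : IsGenApprox f₁ g₁) (h₂ : IsGenApprox f₂ g₂) :
    IsGenApprox (f₁ ⊔ f₂) (g₁ ⊔ g₂) :=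
  of_abs_le (fun n => (h₁.1 n).sup (h₂.1 n)) h₁ h₂ fun n φ =>
    norm_sup_sub_sup_le_add_norm (f₁ φ) (f₂ φ) (g₁ n φ) (g₂ n φ)

theorem smul (c : ℝ) (h : IsGenApprox f g) : IsGenApprox (c • f) (c • g) :=
  ⟨fun n => (h.1 n).smul c, by
    simpa [← smul_sub, fblNorm_smul] using ENNReal.Tendsto.const_mul h.2 (Or.inr enorm_ne_top)⟩

theorem tendsto_mul (h : IsGenApprox f g) (K : ℝ≥0∞) (hK : K ≠ ⊤) :
    Tendsto (fun n => K * fblNorm (f - g n)) atTop (𝓝 0) := by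
  simpa using ENNReal.Tendsto.const_mul h.2 (Or.inr hK)

theorem tendsto_apply {Y : Type*} [NormedAddCommGroup Y] {Φ : (StrongDual ℝ E → ℝ) → Y}
    (hadd : ∀ f g, FBLMem f → FBLMem g → Φ (f + g) = Φ f + Φ g) {C : ℝ}
    (hC : ∀ f, FBLMem f → ‖Φ f‖ ≤ C * (fblNorm f).toReal)
    {f : StrongDual ℝ E → ℝ} {u : ℕ → StrongDual ℝ E → ℝ} (hf : FBLMem f)
    (hu : IsGenApprox f u) : Tendsto (fun n => Φ (u n)) atTop (𝓝 (Φ f)) := by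
  refine tendsto_iff_norm_sub_tendsto_zero.2 <|
    squeeze_zero (fun _ => norm_nonneg _) (fun n => ?_) <|
      by simpa using ((ENNReal.tendsto_toReal ENNReal.zero_ne_top).comp hu.2).const_mul C
  have hfu := hf.sub_genLat (hu.1 n)
  have hsplit : Φ f = Φ (f - u n) + Φ (u n) := by
    rw [← hadd _ _ hfu (hu.1 n).fblMem, sub_add_cancel]
  rw [hsplit, sub_add_cancel_right, norm_neg]
  exact hC _ hfu

end IsGenApprox

variable {X : Type*} [NormedAddCommGroup X] [Lattice X] [HasSolidNorm X] [IsOrderedAddMonoid X]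
  [NormedSpace ℝ X]

/-- With the Riesz–Kantorovich decomposition `y = Σ_a y_a`, `y (⋁_a T a) = Σ_a y_a (T a)`,
take `ψ a = y_a ∘ T`. -/
theorem exists_le_sum_eval (T : E →L[ℝ] X) {y : X →ₗ[ℝ] ℝ} (hy : Monotone y)
    (hy_le : ∀ w, y w ≤ ‖w‖) (r : SupDiff E) :
    ∃ ψ : E → StrongDual ℝ E, (∀ x, ∑ a ∈ r.pos, |ψ a x| ≤ ‖T‖ * ‖x‖) ∧
      y (r.eval T) ≤ ∑ a ∈ r.pos, r.eval (ψ a) := by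
  obtain ⟨g, hg, hg_le, hg_sum, hg_sup⟩ :=
    y.exists_monotone_sum_eq_apply_sup' hy r.pos_nonempty T
  have hy_sum : ∀ w, y w = ∑ a ∈ r.pos, g a w := fun w => by rw [← LinearMap.sum_apply, hg_sum]
  have hg_abs : ∀ a w, |g a w| ≤ ‖w‖ := fun a w => by
    have := (monotone_iff_map_nonneg _).1 (hg_le a) |w| (abs_nonneg w)
    rw [LinearMap.sub_apply, sub_nonneg] at this
    exact ((g a).abs_apply_le_apply_abs (hg a) w).trans
      (this.trans ((hy_le _).trans (norm_abs_eq_norm w).le))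
  let ψ a : StrongDual ℝ E := ((g a).mkContinuous 1 fun w => by simpa using hg_abs a w).comp T
  refine ⟨ψ, fun x => ?_, ?_⟩
  · calc ∑ a ∈ r.pos, |ψ a x| ≤ ∑ a ∈ r.pos, g a |T x| :=
          Finset.sum_le_sum fun a _ => (g a).abs_apply_le_apply_abs (hg a) (T x)
      _ = y |T x| := (hy_sum _).symm
      _ ≤ ‖T x‖ := (hy_le _).trans (norm_abs_eq_norm _).le
      _ ≤ ‖T‖ * ‖x‖ := T.le_opNorm x
  · rw [SupDiff.eval, map_sub, ← hg_sup, hy_sum, ← Finset.sum_sub_distrib]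
    refine Finset.sum_le_sum fun a ha => sub_le_sub ?_ ?_
    · exact (Finset.le_sup' (ψ a) ha :)
    · exact Finset.sup'_le _ _ fun b hb => hg a (Finset.le_sup' T hb)

theorem enorm_eval_le (T : E →L[ℝ] X) (r : SupDiff E) :
    ‖r.eval T‖ₑ ≤ ‖T‖ₑ * fblNorm (r.eval (delta E)) := by
  classical
  obtain ⟨y, hy, hy_le, hy_abs⟩ := exists_monotone_le_norm_apply_eq (abs_nonneg (r.eval T))
  obtain ⟨ψ, hψ, hle⟩ := exists_le_sum_eval T hy hy_le (r ⊔ -r)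
  have key : ‖r.eval T‖ ≤ ∑ a ∈ (r ⊔ -r).pos, |r.eval (delta E) (ψ a)| := calc
    ‖r.eval T‖ = y ((r ⊔ -r).eval T) := by
        rw [SupDiff.eval_sup, SupDiff.eval_neg, ← norm_abs_eq_norm, ← hy_abs]
        rfl
    _ ≤ ∑ a ∈ (r ⊔ -r).pos, (r ⊔ -r).eval (ψ a) := hle
    _ = ∑ a ∈ (r ⊔ -r).pos, |r.eval (delta E) (ψ a)| := by
        simp only [SupDiff.eval_sup, SupDiff.eval_neg, eval_delta_apply]
        rfl
  calc ‖r.eval T‖ₑ = ENNReal.ofReal ‖r.eval T‖ := (ofReal_norm _).symm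
    _ ≤ ENNReal.ofReal (∑ a ∈ (r ⊔ -r).pos, |r.eval (delta E) (ψ a)|) :=
        ENNReal.ofReal_le_ofReal key
    _ ≤ ENNReal.ofReal ‖T‖ * fblNorm (r.eval (delta E)) :=
        ofReal_sum_abs_le_mul_fblNorm (posHom_eval_delta r) _ ψ (norm_nonneg T) hψ
    _ = ‖T‖ₑ * fblNorm (r.eval (delta E)) := by rw [ofReal_norm]

variable (T : E →L[ℝ] X)

open Classical in
/-- Independent of the chosen representation by `eval_eq_of_eval_delta_eq`; `0` off the
generated sublattice. -/
def lift₀ (f : StrongDual ℝ E → ℝ) : X :=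
  if h : ∃ r : SupDiff E, r.eval (delta E) = f then h.choose.eval T else 0

theorem eval_eq_of_eval_delta_eq {r s : SupDiff E} (h : r.eval (delta E) = s.eval (delta E)) :
    r.eval T = s.eval T := by
  classical
  have := enorm_eval_le T (r - s)
  rwa [SupDiff.eval_sub, SupDiff.eval_sub, h, sub_self, fblNorm_zero, mul_zero,
    nonpos_iff_eq_zero, enorm_eq_zero, sub_eq_zero] at this

theorem lift₀_eval (r : SupDiff E) : lift₀ T (r.eval (delta E)) = r.eval T := by
  have h : ∃ s : SupDiff E, s.eval (delta E) = r.eval (delta E) := ⟨r, rfl⟩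
  rw [lift₀, dif_pos h]
  exact eval_eq_of_eval_delta_eq T h.choose_spec

theorem lift₀_delta (x : E) : lift₀ T (fun φ => φ x) = T x := by
  have := lift₀_eval T (SupDiff.of x)
  rwa [SupDiff.eval_of, SupDiff.eval_of] at this

variable {T}

theorem lift₀_add {u v : StrongDual ℝ E → ℝ} (hu : GenLat E u) (hv : GenLat E v) :
    lift₀ T (u + v) = lift₀ T u + lift₀ T v := by
  classical
  obtain ⟨r, rfl⟩ := hu.exists_eval_delta_eq
  obtain ⟨s, rfl⟩ := hv.exists_eval_delta_eq
  rw [← SupDiff.eval_add, lift₀_eval, lift₀_eval, lift₀_eval, SupDiff.eval_add]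

theorem lift₀_smul (c : ℝ) {u : StrongDual ℝ E → ℝ} (hu : GenLat E u) :
    lift₀ T (c • u) = c • lift₀ T u := by
  classical
  obtain ⟨r, rfl⟩ := hu.exists_eval_delta_eq
  rw [← SupDiff.eval_smul, lift₀_eval, lift₀_eval, SupDiff.eval_smul]

theorem lift₀_sup {u v : StrongDual ℝ E → ℝ} (hu : GenLat E u) (hv : GenLat E v) :
    lift₀ T (u ⊔ v) = lift₀ T u ⊔ lift₀ T v := by
  classical
  obtain ⟨r, rfl⟩ := hu.exists_eval_delta_eq
  obtain ⟨s, rfl⟩ := hv.exists_eval_delta_eq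
  rw [← SupDiff.eval_sup, lift₀_eval, lift₀_eval, lift₀_eval, SupDiff.eval_sup]

theorem edist_lift₀_le {u v : StrongDual ℝ E → ℝ} (hu : GenLat E u) (hv : GenLat E v) :
    edist (lift₀ T u) (lift₀ T v) ≤ ‖T‖ₑ * fblNorm (u - v) := by
  classical
  obtain ⟨r, rfl⟩ := hu.exists_eval_delta_eq
  obtain ⟨s, rfl⟩ := hv.exists_eval_delta_eq
  rw [edist_eq_enorm_sub, lift₀_eval, lift₀_eval, ← SupDiff.eval_sub, ← SupDiff.eval_sub]
  exact enorm_eval_le T (r - s)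

theorem enorm_lift₀_le {u : StrongDual ℝ E → ℝ} (hu : GenLat E u) :
    ‖lift₀ T u‖ₑ ≤ ‖T‖ₑ * fblNorm u := by
  obtain ⟨r, rfl⟩ := hu.exists_eval_delta_eq
  rw [lift₀_eval]
  exact enorm_eval_le T r

theorem IsGenApprox.edist_lift₀_le {f : StrongDual ℝ E → ℝ} {g₁ g₂ : ℕ → StrongDual ℝ E → ℝ}
    (h₁ : IsGenApprox f g₁) (h₂ : IsGenApprox f g₂) (m n : ℕ) :
    edist (lift₀ T (g₁ m)) (lift₀ T (g₂ n)) ≤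
      ‖T‖ₑ * fblNorm (f - g₁ m) + ‖T‖ₑ * fblNorm (f - g₂ n) := by
  rw [← mul_add]
  refine (FreeBanachLattice.edist_lift₀_le (h₁.1 m) (h₂.1 n)).trans
    (mul_le_mul_of_nonneg_left (fblNorm_le_add_of_abs_le fun φ => ?_) zero_le)
  simpa [abs_sub_comm (f φ)] using abs_sub_le (g₁ m φ) (f φ) (g₂ n φ)

theorem apply_eq_lift₀ {Φ : (StrongDual ℝ E → ℝ) → X}
    (hadd : ∀ f g, FBLMem f → FBLMem g → Φ (f + g) = Φ f + Φ g)
    (hsmul : ∀ (c : ℝ) f, FBLMem f → Φ (c • f) = c • Φ f)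
    (hsup : ∀ f g, FBLMem f → FBLMem g → Φ (f ⊔ g) = Φ f ⊔ Φ g)
    (hdelta : ∀ x : E, Φ (fun φ => φ x) = T x) {u : StrongDual ℝ E → ℝ} (hu : GenLat E u) :
    Φ u = lift₀ T u := by
  induction hu with
  | delta x => rw [hdelta, lift₀_delta]
  | add hu hv ihu ihv => rw [hadd _ _ hu.fblMem hv.fblMem, ihu, ihv, lift₀_add hu hv]
  | smul c hu ih => rw [hsmul c _ hu.fblMem, ih, lift₀_smul c hu]
  | sup hu hv ihu ihv => rw [hsup _ _ hu.fblMem hv.fblMem, ihu, ihv, lift₀_sup hu hv]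

variable [CompleteSpace X] (T)

open Classical in
/-- The limit of `lift₀ T` along any approximating sequence (`tendsto_lift`); `0` outside
`FBL[E]`. -/
def lift (f : StrongDual ℝ E → ℝ) : X :=
  if h : ∃ g, IsGenApprox f g then limUnder atTop (fun n => lift₀ T (h.choose n)) else 0

theorem tendsto_lift {f : StrongDual ℝ E → ℝ} {g : ℕ → StrongDual ℝ E → ℝ}
    (hg : IsGenApprox f g) : Tendsto (fun n => lift₀ T (g n)) atTop (𝓝 (lift T f)) := by
  have h : ∃ g, IsGenApprox f g := ⟨g, hg⟩
  have hK : ‖T‖ₑ ≠ ⊤ := enorm_ne_top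
  obtain ⟨a, ha⟩ := cauchySeq_tendsto_of_complete <| cauchySeq_of_edist_le_add
    (h.choose_spec.tendsto_mul _ hK) (h.choose_spec.edist_lift₀_le h.choose_spec)
  rw [lift, dif_pos h, ha.limUnder_eq]
  have hclose : Tendsto (fun n => edist (lift₀ T (g n)) (lift₀ T (h.choose n))) atTop (𝓝 0) :=
    tendsto_of_tendsto_of_tendsto_of_le_of_le tendsto_const_nhds
      (by simpa using (hg.tendsto_mul _ hK).add (h.choose_spec.tendsto_mul _ hK))
      (fun _ => zero_le) fun n => hg.edist_lift₀_le h.choose_spec n n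
  refine tendsto_iff_edist_tendsto_0.2 <| tendsto_of_tendsto_of_tendsto_of_le_of_le
    tendsto_const_nhds ?_ (fun _ => zero_le) fun n => edist_triangle _ (lift₀ T (h.choose n)) a
  simpa using hclose.add (tendsto_iff_edist_tendsto_0.1 ha)

theorem lift_eq_lift₀ {f : StrongDual ℝ E → ℝ} (hf : GenLat E f) : lift T f = lift₀ T f :=
  tendsto_nhds_unique (tendsto_lift T (g := fun _ => f) ⟨fun _ => hf, by simp⟩) tendsto_const_nhds

theorem lift_delta (x : E) : lift T (fun φ => φ x) = T x := by
  rw [lift_eq_lift₀ T (GenLat.delta x), lift₀_delta]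

variable {T}

theorem lift_add {f g : StrongDual ℝ E → ℝ} (hf : FBLMem f) (hg : FBLMem g) :
    lift T (f + g) = lift T f + lift T g := by
  obtain ⟨u, hu⟩ := hf.exists_isGenApprox
  obtain ⟨v, hv⟩ := hg.exists_isGenApprox
  refine tendsto_nhds_unique (tendsto_lift T (hu.add hv)) ?_
  simpa only [Pi.add_apply, lift₀_add (hu.1 _) (hv.1 _)] using
    (tendsto_lift T hu).add (tendsto_lift T hv)

theorem lift_smul (c : ℝ) {f : StrongDual ℝ E → ℝ} (hf : FBLMem f) :
    lift T (c • f) = c • lift T f := by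
  obtain ⟨u, hu⟩ := hf.exists_isGenApprox
  refine tendsto_nhds_unique (tendsto_lift T (hu.smul c)) ?_
  simpa only [Pi.smul_apply, lift₀_smul c (hu.1 _)] using (tendsto_lift T hu).const_smul c

theorem lift_sup {f g : StrongDual ℝ E → ℝ} (hf : FBLMem f) (hg : FBLMem g) :
    lift T (f ⊔ g) = lift T f ⊔ lift T g := by
  obtain ⟨u, hu⟩ := hf.exists_isGenApprox
  obtain ⟨v, hv⟩ := hg.exists_isGenApprox
  refine tendsto_nhds_unique (tendsto_lift T (hu.sup hv)) ?_
  simpa only [Pi.sup_apply, lift₀_sup (hu.1 _) (hv.1 _)] using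
    (tendsto_lift T hu).sup_nhds (tendsto_lift T hv)

theorem enorm_lift_le {f : StrongDual ℝ E → ℝ} (hf : FBLMem f) :
    ‖lift T f‖ₑ ≤ ‖T‖ₑ * fblNorm f := by
  obtain ⟨u, hu⟩ := hf.exists_isGenApprox
  refine le_of_tendsto_of_tendsto' (tendsto_lift T hu).enorm
    (by simpa using tendsto_const_nhds.add (hu.tendsto_mul ‖T‖ₑ enorm_ne_top)) fun n => ?_
  rw [← mul_add]
  refine (enorm_lift₀_le (hu.1 n)).trans (mul_le_mul_of_nonneg_left
    (fblNorm_le_add_of_abs_le fun φ => ?_) zero_le)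
  simpa using abs_sub (f φ) (f φ - u n φ)

theorem norm_lift_le {f : StrongDual ℝ E → ℝ} (hf : FBLMem f) :
    ‖lift T f‖ ≤ ‖T‖ * (fblNorm f).toReal := by
  have := ENNReal.toReal_mono (ENNReal.mul_ne_top enorm_ne_top hf.fblNorm_ne_top)
    (enorm_lift_le (T := T) hf)
  rwa [toReal_enorm, ENNReal.toReal_mul, toReal_enorm] at this

theorem opNorm_le_of_norm_lift_le {C : ℝ} (hC : 0 ≤ C)
    (h : ∀ f, FBLMem f → ‖lift T f‖ ≤ C * (fblNorm f).toReal) : ‖T‖ ≤ C :=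
  T.opNorm_le_bound hC fun x => by
    have hx := h _ (GenLat.delta x).fblMem
    rw [lift_delta] at hx
    exact hx.trans (mul_le_mul_of_nonneg_left (ENNReal.toReal_le_of_le_ofReal (norm_nonneg x)
      ((fblNorm_delta_le x).trans_eq (ofReal_norm x).symm)) hC)

theorem apply_eq_lift {Φ : (StrongDual ℝ E → ℝ) → X}
    (hadd : ∀ f g, FBLMem f → FBLMem g → Φ (f + g) = Φ f + Φ g)
    (hsmul : ∀ (c : ℝ) f, FBLMem f → Φ (c • f) = c • Φ f)
    (hsup : ∀ f g, FBLMem f → FBLMem g → Φ (f ⊔ g) = Φ f ⊔ Φ g)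
    (hdelta : ∀ x : E, Φ (fun φ => φ x) = T x) {C : ℝ}
    (hC : ∀ f, FBLMem f → ‖Φ f‖ ≤ C * (fblNorm f).toReal)
    {f : StrongDual ℝ E → ℝ} (hf : FBLMem f) : Φ f = lift T f := by
  obtain ⟨u, hu⟩ := hf.exists_isGenApprox
  refine tendsto_nhds_unique (hu.tendsto_apply hadd hC hf) ?_
  simpa only [apply_eq_lift₀ hadd hsmul hsup hdelta (hu.1 _)] using tendsto_lift T hu

end FreeBanachLattice

open FreeBanachLattice

theorem stmt18_general {E : Type*} [NormedAddCommGroup E] [NormedSpace ℝ E]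
    {X : Type*} [NormedAddCommGroup X] [Lattice X] [HasSolidNorm X] [IsOrderedAddMonoid X] [NormedSpace ℝ X] [CompleteSpace X]
    (T : E →L[ℝ] X) :
    ∃ Φ : (StrongDual ℝ E → ℝ) → X,
      (∀ f g, FBLMem f → FBLMem g → Φ (f + g) = Φ f + Φ g) ∧
      (∀ (c : ℝ) f, FBLMem f → Φ (c • f) = c • Φ f) ∧
      (∀ f g, FBLMem f → FBLMem g → Φ (f ⊔ g) = Φ f ⊔ Φ g) ∧
      (∀ x : E, Φ (fun φ => φ x) = T x) ∧
      (∀ f, FBLMem f → ‖Φ f‖ ≤ ‖T‖ * (fblNorm f).toReal) ∧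
      (∀ C : ℝ, 0 ≤ C → (∀ f, FBLMem f → ‖Φ f‖ ≤ C * (fblNorm f).toReal) → ‖T‖ ≤ C) ∧
      (∀ Φ' : (StrongDual ℝ E → ℝ) → X,
        (∀ f g, FBLMem f → FBLMem g → Φ' (f + g) = Φ' f + Φ' g) →
        (∀ (c : ℝ) f, FBLMem f → Φ' (c • f) = c • Φ' f) →
        (∀ f g, FBLMem f → FBLMem g → Φ' (f ⊔ g) = Φ' f ⊔ Φ' g) →
        (∀ x : E, Φ' (fun φ => φ x) = T x) →
        (∃ C : ℝ, ∀ f, FBLMem f → ‖Φ' f‖ ≤ C * (fblNorm f).toReal) →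
        ∀ f, FBLMem f → Φ' f = Φ f) :=
  ⟨lift T, fun _ _ => lift_add, fun c _ => lift_smul c, fun _ _ => lift_sup, lift_delta T,
    fun _ => norm_lift_le, fun _ hC => opNorm_le_of_norm_lift_le hC,
    fun _ hadd hsmul hsup hdelta ⟨_, hC⟩ _ => apply_eq_lift hadd hsmul hsup hdelta hC⟩

/-- universal property of `FBL[E]`: every bounded operator `T : E → X` into a
Banach lattice `X` extends to a unique (bounded) lattice homomorphism `T̂ : FBL[E] → X` with
`T̂(δ_x) = T(x)` and `‖T̂‖ = ‖T‖`. Here `T̂` is encoded as a map on the members of `FBL[E]`,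
linear, sup-preserving, with `‖T̂ f‖ ≤ ‖T‖ ‖f‖_{FBL[E]}` (and `‖T‖` is attained, i.e. is the
least such bound), unique among such maps. -/
theorem stmt18 {E : Type*} [NormedAddCommGroup E] [NormedSpace ℝ E] [CompleteSpace E]
    {X : Type*} [NormedAddCommGroup X] [Lattice X] [HasSolidNorm X] [IsOrderedAddMonoid X] [NormedSpace ℝ X] [CompleteSpace X]
    (T : E →L[ℝ] X) :
    ∃ Φ : (StrongDual ℝ E → ℝ) → X,
      (∀ f g, FBLMem f → FBLMem g → Φ (f + g) = Φ f + Φ g) ∧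
      (∀ (c : ℝ) f, FBLMem f → Φ (c • f) = c • Φ f) ∧
      (∀ f g, FBLMem f → FBLMem g → Φ (f ⊔ g) = Φ f ⊔ Φ g) ∧
      (∀ x : E, Φ (fun φ => φ x) = T x) ∧
      (∀ f, FBLMem f → ‖Φ f‖ ≤ ‖T‖ * (fblNorm f).toReal) ∧
      (∀ C : ℝ, 0 ≤ C → (∀ f, FBLMem f → ‖Φ f‖ ≤ C * (fblNorm f).toReal) → ‖T‖ ≤ C) ∧
      (∀ Φ' : (StrongDual ℝ E → ℝ) → X,
        (∀ f g, FBLMem f → FBLMem g → Φ' (f + g) = Φ' f + Φ' g) →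
        (∀ (c : ℝ) f, FBLMem f → Φ' (c • f) = c • Φ' f) →
        (∀ f g, FBLMem f → FBLMem g → Φ' (f ⊔ g) = Φ' f ⊔ Φ' g) →
        (∀ x : E, Φ' (fun φ => φ x) = T x) →
        (∃ C : ℝ, ∀ f, FBLMem f → ‖Φ' f‖ ≤ C * (fblNorm f).toReal) →
        ∀ f, FBLMem f → Φ' f = Φ f) :=
  stmt18_general T
end
end
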